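/- arXiv:math/9907101 — 4 statements merged into one kernel-verified Lean document; each statement's English description precedes it below -/
import Mathlib

section
/- Let W^* be a cochain complex of modules over a ring, indexed by integers, together with a cochain map Φ^*: W^* → (W^{2m-1-*})' (for some fixed m) into the antidual complex, such that Φ^* induces an isomorphism on cohomology in every degree, Φ^* is an isomorphism of modules for all * not in {m-1, m}, and the differential D^{m-1}: W^{m-1} → W^m is the zero map. Then Φ^{m-1} and Φ^m are also isomorphisms of modules. -/
/-- Sublemma: given a cochain complex `W` over a ring and its "antidual" complex
`V` (so `V i` plays the role of `(W^{2m-1-i})'`; in particular the differential of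
`V` in degree `m-1` is the transpose of the differential `D^{m-1}` of `W`), and a
cochain map `Φ : W → V` which induces an isomorphism on cohomology in every degree,
is an isomorphism of modules in every degree other than `m-1`, `m`, and such that
the differential `D^{m-1} : W^{m-1} → W^m` vanishes (hence so does the transposed
differential of `V` in degree `m-1`), then `Φ^{m-1}` and `Φ^m` are also
isomorphisms of modules. -/
theorem stmt_0 {R : Type*} [Ring R] (m : ℤ)
    (W V : ℤ → Type*) [∀ i, AddCommGroup (W i)] [∀ i, Module R (W i)]
    [∀ i, AddCommGroup (V i)] [∀ i, Module R (V i)]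
    (D : ∀ i, W i →ₗ[R] W (i + 1)) (d : ∀ i, V i →ₗ[R] V (i + 1))
    (hD2 : ∀ i (x : W i), D (i + 1) (D i x) = 0)
    (hd2 : ∀ i (y : V i), d (i + 1) (d i y) = 0)
    (Φ : ∀ i, W i →ₗ[R] V i)
    (hΦchain : ∀ i (x : W i), Φ (i + 1) (D i x) = d i (Φ i x))
    -- Φ is injective on cohomology in every degree:
    (hqinj : ∀ i (x : W (i + 1)), D (i + 1) x = 0 →
      (∃ v : V i, d i v = Φ (i + 1) x) → ∃ w : W i, D i w = x)
    -- Φ is surjective on cohomology in every degree: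
    (hqsurj : ∀ i (y : V (i + 1)), d (i + 1) y = 0 →
      ∃ x : W (i + 1), D (i + 1) x = 0 ∧ ∃ v : V i, d i v = y - Φ (i + 1) x)
    -- Φ is an isomorphism of modules in each degree other than m-1, m:
    (hiso : ∀ i, i ≠ m - 1 → i ≠ m → Function.Bijective (Φ i))
    -- the differential W^{m-1} → W^m vanishes:
    (hDm : D (m - 1) = 0)
    -- hence its transpose, the differential of the antidual complex V in degree m-1,
    -- vanishes as well:
    (hdm : d (m - 1) = 0) :
    Function.Bijective (Φ (m - 1)) ∧ Function.Bijective (Φ m) := by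
  obtain ⟨n, rfl⟩ : ∃ n, m = n + 1 + 1 + 1 := ⟨m - 3, by ring⟩
  have ep : n + 1 + 1 + 1 - 1 = n + 1 + 1 := by ring
  rw [ep] at hDm hdm
  rw [ep]
  simp only [ep] at hiso
  -- Notation: W^{m-3} = W n, W^{m-2} = W (n+1), W^{m-1} = W (n+1+1), W^m = W (n+1+1+1)
  have bijA : Function.Bijective (Φ n) := hiso _ (by omega) (by omega)
  have bijB : Function.Bijective (Φ (n + 1)) := hiso _ (by omega) (by omega)
  have bijC : Function.Bijective (Φ (n + 1 + 1 + 1 + 1)) := hiso _ (by omega) (by omega)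
  have bijE : Function.Bijective (Φ (n + 1 + 1 + 1 + 1 + 1)) := hiso _ (by omega) (by omega)
  constructor
  · constructor
    · -- injectivity of Φ^{m-1}
      rw [injective_iff_map_eq_zero]
      intro x hx
      obtain ⟨w, hw⟩ := hqinj (n + 1) x (by rw [hDm]; rfl) ⟨0, by simp [hx]⟩
      have hcyc : d (n + 1) (Φ (n + 1) w) = 0 := by
        rw [← hΦchain, hw, hx]
      obtain ⟨x₀, hx₀, v, hv⟩ := hqsurj n (Φ (n + 1) w) hcyc
      obtain ⟨u, rfl⟩ := bijA.surjective v
      have hu : D n u = w - x₀ := by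
        apply bijB.injective
        rw [hΦchain, hv, map_sub]
      have h0 : D (n + 1) (w - x₀) = 0 := by rw [← hu]; exact hD2 n u
      rw [map_sub, hx₀, sub_zero] at h0
      rw [← hw, h0]
    · -- surjectivity of Φ^{m-1}
      intro y
      obtain ⟨x, -, v, hv⟩ := hqsurj (n + 1) y (by rw [hdm]; rfl)
      obtain ⟨u, rfl⟩ := bijB.surjective v
      refine ⟨x + D (n + 1) u, ?_⟩
      rw [map_add, hΦchain, hv]
      abel
  · constructor
    · -- injectivity of Φ^m
      rw [injective_iff_map_eq_zero]
      intro x hx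
      have hDx : D (n + 1 + 1 + 1) x = 0 := by
        apply bijC.injective
        rw [hΦchain, hx, map_zero, map_zero]
      obtain ⟨w, hw⟩ := hqinj (n + 1 + 1) x hDx ⟨0, by simp [hx, hdm]⟩
      rw [← hw, hDm]; rfl
    · -- surjectivity of Φ^m
      intro y
      obtain ⟨z, hz⟩ := bijC.surjective (d (n + 1 + 1 + 1) y)
      have hDz : D (n + 1 + 1 + 1 + 1) z = 0 := by
        apply bijE.injective
        rw [hΦchain, hz, hd2, map_zero]
      obtain ⟨w, hw⟩ := hqinj (n + 1 + 1 + 1) z hDz ⟨y, hz.symm⟩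
      have hcyc : d (n + 1 + 1 + 1) (y - Φ (n + 1 + 1 + 1) w) = 0 := by
        rw [map_sub, ← hΦchain, hw, hz, sub_self]
      obtain ⟨x, -, v, hv⟩ := hqsurj (n + 1 + 1) (y - Φ (n + 1 + 1 + 1) w) hcyc
      rw [hdm] at hv
      have h2 : y - Φ (n + 1 + 1 + 1) w - Φ (n + 1 + 1 + 1) x = 0 :=
        (congrArg id hv).symm.trans rfl
      refine ⟨x + w, ?_⟩
      rw [map_add]
      rw [sub_sub, sub_eq_zero] at h2
      rw [h2]; abel
end

section
/- The composition of two double homotopy equivalences is a double homotopy equivalence. That is, if (f_1, g_1, A_1, B_1, α_1, β_1) is a double homotopy equivalence from C_1 to C_2 and (f_2, g_2, A_2, B_2, α_2, β_2) is one from C_2 to C_3, then there exist data making (f_2∘f_1, g_1∘g_2) into a double homotopy equivalence from C_1 to C_3. -/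
/-- A double homotopy equivalence between cochain complexes `(C₁, d₁)` and `(C₂, d₂)`:
cochain maps `f : C₁ → C₂`, `g : C₂ → C₁`, degree `-1` maps `A`, `B` with
`1 - gf = d₁A + Ad₁` and `1 - fg = d₂B + Bd₂`, and degree `-2` maps `α`, `β` with
`gB - Ag = d₁α - αd₂` and `fA - Bf = d₂β - βd₁`. -/
def IsDoubleHomotopyEquiv {R : Type*} [Ring R]
    (C₁ C₂ : ℤ → Type*) [∀ i, AddCommGroup (C₁ i)] [∀ i, Module R (C₁ i)]
    [∀ i, AddCommGroup (C₂ i)] [∀ i, Module R (C₂ i)]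
    (d₁ : ∀ i, C₁ i →ₗ[R] C₁ (i + 1)) (d₂ : ∀ i, C₂ i →ₗ[R] C₂ (i + 1))
    (f : ∀ i, C₁ i →ₗ[R] C₂ i) (g : ∀ i, C₂ i →ₗ[R] C₁ i)
    (A : ∀ i, C₁ (i + 1) →ₗ[R] C₁ i) (B : ∀ i, C₂ (i + 1) →ₗ[R] C₂ i)
    (α : ∀ i, C₂ (i + 1 + 1) →ₗ[R] C₁ i) (β : ∀ i, C₁ (i + 1 + 1) →ₗ[R] C₂ i) : Prop :=
  (∀ i (x : C₁ i), f (i + 1) (d₁ i x) = d₂ i (f i x)) ∧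
  (∀ i (y : C₂ i), g (i + 1) (d₂ i y) = d₁ i (g i y)) ∧
  (∀ i (x : C₁ (i + 1)), x - g (i + 1) (f (i + 1) x)
      = d₁ i (A i x) + A (i + 1) (d₁ (i + 1) x)) ∧
  (∀ i (y : C₂ (i + 1)), y - f (i + 1) (g (i + 1) y)
      = d₂ i (B i y) + B (i + 1) (d₂ (i + 1) y)) ∧
  (∀ i (y : C₂ (i + 1 + 1)),
      g (i + 1) (B (i + 1) y) - A (i + 1) (g (i + 1 + 1) y)
        = d₁ i (α i y) - α (i + 1) (d₂ (i + 1 + 1) y)) ∧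
  (∀ i (x : C₁ (i + 1 + 1)),
      f (i + 1) (A (i + 1) x) - B (i + 1) (f (i + 1 + 1) x)
        = d₂ i (β i x) - β (i + 1) (d₁ (i + 1 + 1) x))

/-- The composition of two double homotopy equivalences is a double homotopy
equivalence. -/
theorem stmt_2 {R : Type*} [Ring R]
    (C₁ C₂ C₃ : ℤ → Type*)
    [∀ i, AddCommGroup (C₁ i)] [∀ i, Module R (C₁ i)]
    [∀ i, AddCommGroup (C₂ i)] [∀ i, Module R (C₂ i)]
    [∀ i, AddCommGroup (C₃ i)] [∀ i, Module R (C₃ i)]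
    (d₁ : ∀ i, C₁ i →ₗ[R] C₁ (i + 1)) (d₂ : ∀ i, C₂ i →ₗ[R] C₂ (i + 1))
    (d₃ : ∀ i, C₃ i →ₗ[R] C₃ (i + 1))
    (f₁ : ∀ i, C₁ i →ₗ[R] C₂ i) (g₁ : ∀ i, C₂ i →ₗ[R] C₁ i)
    (A₁ : ∀ i, C₁ (i + 1) →ₗ[R] C₁ i) (B₁ : ∀ i, C₂ (i + 1) →ₗ[R] C₂ i)
    (α₁ : ∀ i, C₂ (i + 1 + 1) →ₗ[R] C₁ i) (β₁ : ∀ i, C₁ (i + 1 + 1) →ₗ[R] C₂ i)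
    (f₂ : ∀ i, C₂ i →ₗ[R] C₃ i) (g₂ : ∀ i, C₃ i →ₗ[R] C₂ i)
    (A₂ : ∀ i, C₂ (i + 1) →ₗ[R] C₂ i) (B₂ : ∀ i, C₃ (i + 1) →ₗ[R] C₃ i)
    (α₂ : ∀ i, C₃ (i + 1 + 1) →ₗ[R] C₂ i) (β₂ : ∀ i, C₂ (i + 1 + 1) →ₗ[R] C₃ i)
    (h₁ : IsDoubleHomotopyEquiv C₁ C₂ d₁ d₂ f₁ g₁ A₁ B₁ α₁ β₁)
    (h₂ : IsDoubleHomotopyEquiv C₂ C₃ d₂ d₃ f₂ g₂ A₂ B₂ α₂ β₂) :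
    ∃ (A : ∀ i, C₁ (i + 1) →ₗ[R] C₁ i) (B : ∀ i, C₃ (i + 1) →ₗ[R] C₃ i)
      (α : ∀ i, C₃ (i + 1 + 1) →ₗ[R] C₁ i) (β : ∀ i, C₁ (i + 1 + 1) →ₗ[R] C₃ i),
      IsDoubleHomotopyEquiv C₁ C₃ d₁ d₃
        (fun i => (f₂ i).comp (f₁ i)) (fun i => (g₁ i).comp (g₂ i)) A B α β := by
  
  obtain ⟨hf₁, hg₁, hA₁, hB₁, hα₁, hβ₁⟩ := h₁
  obtain ⟨hf₂, hg₂, hA₂, hB₂, hα₂, hβ₂⟩ := h₂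
  refine ⟨fun i => A₁ i + (g₁ i).comp ((A₂ i).comp (f₁ (i + 1))),
    fun i => B₂ i + (f₂ i).comp ((B₁ i).comp (g₂ (i + 1))),
    fun i => (g₁ i).comp (α₂ i) + (α₁ i).comp (g₂ (i + 1 + 1))
      - (g₁ i).comp ((A₂ i).comp ((B₁ (i + 1)).comp (g₂ (i + 1 + 1)))),
    fun i => (f₂ i).comp (β₁ i) + (β₂ i).comp (f₁ (i + 1 + 1))
      - (f₂ i).comp ((B₁ i).comp ((A₂ (i + 1)).comp (f₁ (i + 1 + 1)))),
    ?_, ?_, ?_, ?_, ?_, ?_⟩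
  · intro i x
    simp only [LinearMap.comp_apply, hf₁, hf₂]
  · intro i y
    simp only [LinearMap.comp_apply, hg₂, hg₁]
  · intro i x
    have a := hA₁ i x
    have b := congrArg (g₁ (i + 1)) (hA₂ i (f₁ (i + 1) x))
    simp only [map_add, map_sub] at b
    have c := hg₁ i (A₂ i (f₁ (i + 1) x))
    have e := congrArg (fun t => g₁ (i + 1) (A₂ (i + 1) t)) (hf₁ (i + 1) x)
    simp only [LinearMap.comp_apply, LinearMap.add_apply, map_add]
    linear_combination (norm := abel) a + b + c - e
  · intro i y
    have a := hB₂ i y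
    have b := congrArg (f₂ (i + 1)) (hB₁ i (g₂ (i + 1) y))
    simp only [map_add, map_sub] at b
    have c := hf₂ i (B₁ i (g₂ (i + 1) y))
    have e := congrArg (fun t => f₂ (i + 1) (B₁ (i + 1) t)) (hg₂ (i + 1) y)
    simp only [LinearMap.comp_apply, LinearMap.add_apply, map_add]
    linear_combination (norm := abel) a + b + c - e
  · intro i y
    have P1 := congrArg (g₁ (i + 1)) (hα₂ i y)
    simp only [map_add, map_sub] at P1
    have c1 := hg₁ i (α₂ i y)
    have P2 := hα₁ i (g₂ (i + 1 + 1) y)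
    have c2 := congrArg (α₁ (i + 1)) (hg₂ (i + 1 + 1) y)
    have Q1 := congrArg (g₁ (i + 1)) (hA₂ i (B₁ (i + 1) (g₂ (i + 1 + 1) y)))
    simp only [map_add, map_sub] at Q1
    have c3 := hg₁ i (A₂ i (B₁ (i + 1) (g₂ (i + 1 + 1) y)))
    have Q2 := congrArg (fun t => g₁ (i + 1) (A₂ (i + 1) t)) (hB₁ (i + 1) (g₂ (i + 1 + 1) y))
    simp only [map_add, map_sub] at Q2
    have c4 := congrArg (fun t => g₁ (i + 1) (A₂ (i + 1) (B₁ (i + 1 + 1) t))) (hg₂ (i + 1 + 1) y)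
    simp only [LinearMap.comp_apply, LinearMap.add_apply, LinearMap.sub_apply, map_add, map_sub]
    linear_combination (norm := abel) P1 + c1 + P2 + c2 - Q1 - c3 + Q2 - c4
  · intro i x
    have P1 := congrArg (f₂ (i + 1)) (hβ₁ i x)
    simp only [map_add, map_sub] at P1
    have c1 := hf₂ i (β₁ i x)
    have P2 := hβ₂ i (f₁ (i + 1 + 1) x)
    have c2 := congrArg (β₂ (i + 1)) (hf₁ (i + 1 + 1) x)
    have Q1 := congrArg (fun t => f₂ (i + 1) (B₁ (i + 1) t)) (hA₂ (i + 1) (f₁ (i + 1 + 1) x))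
    simp only [map_add, map_sub] at Q1
    have Q2 := congrArg (f₂ (i + 1)) (hB₁ i (A₂ (i + 1) (f₁ (i + 1 + 1) x)))
    simp only [map_add, map_sub] at Q2
    have c3 := hf₂ i (B₁ i (A₂ (i + 1) (f₁ (i + 1 + 1) x)))
    have c4 := congrArg (fun t => f₂ (i + 1) (B₁ (i + 1) (A₂ (i + 1 + 1) t))) (hf₁ (i + 1 + 1) x)
    simp only [LinearMap.comp_apply, LinearMap.add_apply, LinearMap.sub_apply, map_add, map_sub]
    linear_combination (norm := abel) P1 + c1 + P2 + c2 + Q1 - c3 - Q2 - c4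
end

section
/- Let Z^* be a cochain complex of Hilbert modules (or inner-product modules) over a ring with involution, with adjointable differentials D_Z, such that Im(D_Z: Z^{m-1} → Z^m) is closed and Z^m decomposes orthogonally as Im(D_Z: Z^{m-1} → Z^m) ⊕ Ker(D_Z^*: Z^m → Z^{m-1}), and Z^{m-1} decomposes as Ker(D_Z: Z^{m-1} → Z^m) ⊕ Im(D_Z^*: Z^m → Z^{m-1}). Define W^* by W^i = Z^i for i ∉ {m-1, m}, W^{m-1} = Ker(D_Z: Z^{m-1} → Z^m), W^m = Ker(D_Z^*: Z^m → Z^{m-1}), with the induced differentials and zero differential W^{m-1} → W^m. Let p: Z^* → W^* be orthogonal projection and i: W^* → Z^* inclusion, and let L = D_Z^* (D_Z D_Z^*|_{Im D_Z})^{-1} on Im(D_Z) ⊂ Z^m and L = 0 elsewhere. Then p and i are cochain maps, p∘i = 1, i∘p = 1 − D_Z L − L D_Z, and L i = 0, p L = 0; hence Z^* and W^* are doubly homotopy equivalent. -/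
/-!
Off the two middle degrees `K i = Z i`, so `p` is the identity and `L = 0`. In degree `m + 1`,
`Im D` and `Ker D*` are orthogonal because `D*` is adjoint to `D`, and `D L` is the identity
on `Im D` and kills `Ker D*`; hence `p = 1 - D L` there. In degree `m`, `L D x` lies in
`Im D* ⊥ Ker D` and `x - L D x ∈ Ker D`, hence `p = 1 - L D`. Every identity then follows
degree by degree, because an orthogonal projection onto `K` is pinned down by `x - p x ⊥ K`
(no completeness is needed for this).
-/

open LinearMap Submodule

section Projection

variable {𝕜 E : Type*} [RCLike 𝕜] [NormedAddCommGroup E] [InnerProductSpace 𝕜 E]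

structure IsOrthogonalProjection (K : Submodule 𝕜 E) (p : E → E) : Prop where
  mem : ∀ x, p x ∈ K
  sub_mem_orthogonal : ∀ x, x - p x ∈ Kᗮ

namespace IsOrthogonalProjection

variable {K : Submodule 𝕜 E} {p : E → E}

theorem eq_of_mem_of_sub_mem_orthogonal (hp : IsOrthogonalProjection K p) {x a : E}
    (ha : a ∈ K) (hxa : x - a ∈ Kᗮ) : p x = a := by
  have hmem : p x - a ∈ Kᗮ := by
    simpa using Kᗮ.sub_mem hxa (hp.sub_mem_orthogonal x)
  exact sub_eq_zero.mp <|
    (Submodule.disjoint_def.mp K.orthogonal_disjoint) _ (K.sub_mem (hp.mem x) ha) hmem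

theorem apply_of_mem (hp : IsOrthogonalProjection K p) {x : E} (hx : x ∈ K) : p x = x :=
  hp.eq_of_mem_of_sub_mem_orthogonal hx (by simp)

theorem apply_of_mem_orthogonal (hp : IsOrthogonalProjection K p) {x : E} (hx : x ∈ Kᗮ) :
    p x = 0 :=
  hp.eq_of_mem_of_sub_mem_orthogonal K.zero_mem (by simpa using hx)

end IsOrthogonalProjection

end Projection

section Adjoint

variable {𝕜 E F : Type*} [RCLike 𝕜] [NormedAddCommGroup E] [InnerProductSpace 𝕜 E]
  [NormedAddCommGroup F] [InnerProductSpace 𝕜 F] {A : E →ₗ[𝕜] F} {B : F →ₗ[𝕜] E}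

theorem apply_mem_orthogonal_ker_adjoint (hadj : ∀ x y, inner 𝕜 (A x) y = inner 𝕜 x (B y))
    (x : E) : A x ∈ (ker B)ᗮ :=
  (mem_orthogonal' _ _).2 fun k hk => by rw [hadj, mem_ker.mp hk, inner_zero_right]

theorem adjoint_apply_mem_orthogonal_ker (hadj : ∀ x y, inner 𝕜 (A x) y = inner 𝕜 x (B y))
    (y : F) : B y ∈ (ker A)ᗮ :=
  (mem_orthogonal _ _).2 fun k hk => by rw [← hadj, mem_ker.mp hk, inner_zero_left]

end Adjoint

section MiddleDegree

variable {𝕜 E F : Type*} [RCLike 𝕜] [NormedAddCommGroup E] [InnerProductSpace 𝕜 E]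
  [NormedAddCommGroup F] [InnerProductSpace 𝕜 F] {A : E →ₗ[𝕜] F} {B : F →ₗ[𝕜] E}
  {ℓ : F →ₗ[𝕜] E}

theorem exists_sub_mem_ker_and_apply_eq (hdec : ∀ z, ∃ y, z - A y ∈ ker B)
    (hℓker : ∀ z, B z = 0 → ℓ z = 0) (z : F) : ∃ y, z - A y ∈ ker B ∧ ℓ z = ℓ (A y) := by
  obtain ⟨y, hy⟩ := hdec z
  exact ⟨y, hy, sub_eq_zero.mp <| by simpa using hℓker _ (mem_ker.mp hy)⟩

theorem IsOrthogonalProjection.apply_eq_sub_of_ker_adjoint {p : F → F}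
    (hp : IsOrthogonalProjection (ker B) p) (hadj : ∀ x y, inner 𝕜 (A x) y = inner 𝕜 x (B y))
    (hdec : ∀ z, ∃ y, z - A y ∈ ker B) (hℓker : ∀ z, B z = 0 → ℓ z = 0)
    (hℓinv : ∀ y, A (ℓ (A y)) = A y) (z : F) : p z = z - A (ℓ z) := by
  obtain ⟨y, hy, hℓz⟩ := exists_sub_mem_ker_and_apply_eq hdec hℓker z
  rw [hℓz, hℓinv]
  exact hp.eq_of_mem_of_sub_mem_orthogonal hy
    (by simpa using apply_mem_orthogonal_ker_adjoint hadj y)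

theorem IsOrthogonalProjection.apply_eq_sub_of_ker {q : E → E}
    (hq : IsOrthogonalProjection (ker A) q) (hadj : ∀ x y, inner 𝕜 (A x) y = inner 𝕜 x (B y))
    (hℓinv : ∀ y, A (ℓ (A y)) = A y) (hℓran : ∀ y, ∃ w, ℓ (A y) = B w) (x : E) :
    q x = x - ℓ (A x) := by
  obtain ⟨w, hw⟩ := hℓran x
  refine hq.eq_of_mem_of_sub_mem_orthogonal (by simp [hℓinv]) ?_
  simpa [hw] using adjoint_apply_mem_orthogonal_ker hadj w

theorem IsOrthogonalProjection.apply_homotopy_eq_zero_of_ker {q : E → E}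
    (hq : IsOrthogonalProjection (ker A) q) (hadj : ∀ x y, inner 𝕜 (A x) y = inner 𝕜 x (B y))
    (hdec : ∀ z, ∃ y, z - A y ∈ ker B) (hℓker : ∀ z, B z = 0 → ℓ z = 0)
    (hℓran : ∀ y, ∃ w, ℓ (A y) = B w) (z : F) : q (ℓ z) = 0 := by
  obtain ⟨y, -, hℓz⟩ := exists_sub_mem_ker_and_apply_eq hdec hℓker z
  obtain ⟨w, hw⟩ := hℓran y
  exact hq.apply_of_mem_orthogonal (hℓz ▸ hw ▸ adjoint_apply_mem_orthogonal_ker hadj w)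

end MiddleDegree

theorem stmt_3_general (m : ℤ) (Z : ℤ → Type*)
    [∀ i, NormedAddCommGroup (Z i)] [∀ i, InnerProductSpace ℂ (Z i)]
    (D : ∀ i, Z i →ₗ[ℂ] Z (i + 1)) (Dstar : ∀ i, Z (i + 1) →ₗ[ℂ] Z i)
    (hadj : ∀ i (x : Z i) (y : Z (i + 1)), (inner ℂ (D i x) y : ℂ) = inner ℂ x (Dstar i y))
    (hD2 : ∀ i (x : Z i), D (i + 1) (D i x) = 0)
    -- `Z^{m+1} = Im(D) ⊕ Ker(D*)` (closed image, orthogonal decomposition)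
    (hdec1 : ∀ z : Z (m + 1), ∃ y : Z m, z - D m y ∈ LinearMap.ker (Dstar m))
    -- the degree `-1` operator `L = D* (D D*|_{Im D})⁻¹` on `Im(D) ⊆ Z^{m+1}`, zero
    -- elsewhere (these properties characterize it uniquely):
    (L : ∀ i, Z (i + 1) →ₗ[ℂ] Z i)
    (hL0 : ∀ i, i ≠ m → L i = 0)
    (hLker : ∀ z : Z (m + 1), Dstar m z = 0 → L m z = 0)
    (hLinv : ∀ y : Z m, D m (L m (D m y)) = D m y)
    (hLran : ∀ y : Z m, ∃ w : Z (m + 1), L m (D m y) = Dstar m w)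
    -- the subcomplex `W`, encoded by submodules `K i ⊆ Z i`:
    (K : ∀ i, Submodule ℂ (Z i))
    (hKo : ∀ i, i ≠ m → i ≠ m + 1 → K i = ⊤)
    (hKm : K m = LinearMap.ker (D m))
    (hKm1 : K (m + 1) = LinearMap.ker (Dstar m))
    -- `p` is the orthogonal projection of `Z` onto `K`:
    (p : ∀ i, Z i →ₗ[ℂ] Z i)
    (hpmem : ∀ i (x : Z i), p i x ∈ K i)
    (hportho : ∀ i (x : Z i), ∀ y ∈ K i, (inner ℂ (x - p i x) y : ℂ) = 0) :
    -- `p` is a cochain map (to `W` with its induced differential, which is zero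
    -- from degree `m` to degree `m+1`):
    ((∀ i, i ≠ m → ∀ x : Z i, p (i + 1) (D i x) = D i (p i x)) ∧
      (∀ x : Z m, p (m + 1) (D m x) = 0)) ∧
    -- the inclusion `i : W → Z` is a cochain map:
    ((∀ i, i ≠ m → ∀ x ∈ K i, D i x ∈ K (i + 1)) ∧ (∀ x ∈ K m, D m x = 0)) ∧
    -- `p ∘ i = 1`:
    (∀ i, ∀ x ∈ K i, p i x = x) ∧
    -- `i ∘ p = 1 - D L - L D`:
    (∀ i (x : Z (i + 1)), p (i + 1) x = x - D i (L i x) - L (i + 1) (D (i + 1) x)) ∧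
    -- `L ∘ i = 0`:
    (∀ i, ∀ x ∈ K (i + 1), L i x = 0) ∧
    -- `p ∘ L = 0`:
    (∀ i (x : Z (i + 1)), p i (L i x) = 0) := by
  have hproj : ∀ i, IsOrthogonalProjection (K i) (p i) := fun i =>
    ⟨hpmem i, fun x => (mem_orthogonal' _ _).2 (hportho i x)⟩
  have hpid : ∀ i, i ≠ m → i ≠ m + 1 → ∀ x, p i x = x := fun i h₁ h₂ _ =>
    (hproj i).apply_of_mem (hKo i h₁ h₂ ▸ mem_top)
  have hpm : ∀ x, p m x = x - L m (D m x) :=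
    (hKm ▸ hproj m).apply_eq_sub_of_ker (hadj m) hLinv hLran
  have hpm₁ : ∀ x, p (m + 1) x = x - D m (L m x) :=
    (hKm1 ▸ hproj (m + 1)).apply_eq_sub_of_ker_adjoint (hadj m) hdec1 hLker hLinv
  refine ⟨⟨fun i hi x => ?_, fun x => ?_⟩, ⟨fun i hi x hx => ?_, fun x hx => mem_ker.mp (hKm ▸ hx)⟩,
    fun i x hx => (hproj i).apply_of_mem hx, fun i x => ?_, fun i x hx => ?_, fun i x => ?_⟩
  · rcases eq_or_ne (i + 1) m with rfl | h₁
    · rw [hpid i (by omega) (by omega), (hproj _).apply_of_mem (hKm ▸ hD2 i x)]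
    rcases eq_or_ne i (m + 1) with rfl | h₂
    · rw [hpid _ (by omega) (by omega), hpm₁, map_sub, hD2, sub_zero]
    · rw [hpid i hi h₂, hpid (i + 1) h₁ (by omega)]
  · exact (hKm1 ▸ hproj (m + 1)).apply_of_mem_orthogonal
      (apply_mem_orthogonal_ker_adjoint (hadj m) x)
  · rcases eq_or_ne (i + 1) m with rfl | h₁
    · exact hKm ▸ hD2 i x
    · exact hKo (i + 1) h₁ (by omega) ▸ mem_top
  · rcases eq_or_ne i m with rfl | h₁
    · simp [hL0 (i + 1) (by omega), hpm₁]
    rcases eq_or_ne (i + 1) m with rfl | h₂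
    · simp [hL0 i h₁, hpm]
    · simp [hL0 i h₁, hL0 (i + 1) h₂, hpid (i + 1) h₂ (by omega)]
  · rcases eq_or_ne i m with rfl | h₁
    · exact hLker x (mem_ker.mp (hKm1 ▸ hx))
    · simp [hL0 i h₁]
  · rcases eq_or_ne i m with rfl | h₁
    · exact (hKm ▸ hproj i).apply_homotopy_eq_zero_of_ker (hadj i) hdec1 hLker hLran x
    · simp [hL0 i h₁]

/-- Splitting off the middle cohomology of a complex `Z` of inner-product modules with
adjointable differentials.  Here the two "middle" degrees of the construction are
`m` and `m + 1` (corresponding to degrees `m-1`, `m` of the paper).  The subcomplex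
`W` is encoded by the family of submodules `K`, with `K i = Z i` off the middle
degrees, `K m = Ker(D)`, `K (m+1) = Ker(D*)`, induced differentials and the zero
differential `K m → K (m+1)`; `p` is the orthogonal projection onto `K`, `i` is the
inclusion and `L = D*(DD*|_{Im D})⁻¹` on `Im(D) ⊆ Z^{m+1}` and `0` elsewhere.
Conclusion: `p` and the inclusion are cochain maps, `p ∘ i = 1`,
`i ∘ p = 1 - D L - L D`, `L ∘ i = 0`, `p ∘ L = 0`; hence `Z` and `W` are doubly
homotopy equivalent. -/
theorem stmt_3 (m : ℤ) (Z : ℤ → Type*)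
    [∀ i, NormedAddCommGroup (Z i)] [∀ i, InnerProductSpace ℂ (Z i)]
    (D : ∀ i, Z i →ₗ[ℂ] Z (i + 1)) (Dstar : ∀ i, Z (i + 1) →ₗ[ℂ] Z i)
    (hadj : ∀ i (x : Z i) (y : Z (i + 1)), (inner ℂ (D i x) y : ℂ) = inner ℂ x (Dstar i y))
    (hD2 : ∀ i (x : Z i), D (i + 1) (D i x) = 0)
    -- `Z^{m+1} = Im(D) ⊕ Ker(D*)` (closed image, orthogonal decomposition)
    (hdec1 : ∀ z : Z (m + 1), ∃ y : Z m, z - D m y ∈ LinearMap.ker (Dstar m))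
    -- `Z^m = Ker(D) ⊕ Im(D*)`
    (hdec2 : ∀ z : Z m, ∃ y : Z (m + 1), z - Dstar m y ∈ LinearMap.ker (D m))
    -- the degree `-1` operator `L = D* (D D*|_{Im D})⁻¹` on `Im(D) ⊆ Z^{m+1}`, zero
    -- elsewhere (these properties characterize it uniquely):
    (L : ∀ i, Z (i + 1) →ₗ[ℂ] Z i)
    (hL0 : ∀ i, i ≠ m → L i = 0)
    (hLker : ∀ z : Z (m + 1), Dstar m z = 0 → L m z = 0)
    (hLinv : ∀ y : Z m, D m (L m (D m y)) = D m y)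
    (hLran : ∀ y : Z m, ∃ w : Z (m + 1), L m (D m y) = Dstar m w)
    -- the subcomplex `W`, encoded by submodules `K i ⊆ Z i`:
    (K : ∀ i, Submodule ℂ (Z i))
    (hKo : ∀ i, i ≠ m → i ≠ m + 1 → K i = ⊤)
    (hKm : K m = LinearMap.ker (D m))
    (hKm1 : K (m + 1) = LinearMap.ker (Dstar m))
    -- `p` is the orthogonal projection of `Z` onto `K`:
    (p : ∀ i, Z i →ₗ[ℂ] Z i)
    (hpmem : ∀ i (x : Z i), p i x ∈ K i)
    (hportho : ∀ i (x : Z i), ∀ y ∈ K i, (inner ℂ (x - p i x) y : ℂ) = 0) :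
    -- `p` is a cochain map (to `W` with its induced differential, which is zero
    -- from degree `m` to degree `m+1`):
    ((∀ i, i ≠ m → ∀ x : Z i, p (i + 1) (D i x) = D i (p i x)) ∧
      (∀ x : Z m, p (m + 1) (D m x) = 0)) ∧
    -- the inclusion `i : W → Z` is a cochain map:
    ((∀ i, i ≠ m → ∀ x ∈ K i, D i x ∈ K (i + 1)) ∧ (∀ x ∈ K m, D m x = 0)) ∧
    -- `p ∘ i = 1`:
    (∀ i, ∀ x ∈ K i, p i x = x) ∧
    -- `i ∘ p = 1 - D L - L D`:
    (∀ i (x : Z (i + 1)), p (i + 1) x = x - D i (L i x) - L (i + 1) (D (i + 1) x)) ∧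
    -- `L ∘ i = 0`:
    (∀ i, ∀ x ∈ K (i + 1), L i x = 0) ∧
    -- `p ∘ L = 0`:
    (∀ i (x : Z (i + 1)), p i (L i x) = 0) :=
  stmt_3_general m Z D Dstar hadj hD2 hdec1 L hL0 hLker hLinv hLran K hKo hKm hKm1 p hpmem hportho
end

section
/- With C^* the ε-coupled mapping-cone complex as above (ε ≠ 0 invertible), if f: Ω^* → W^* is a homotopy equivalence of complexes (with ĝ its adjoint/homotopy inverse and Ŵ obtained from W by shifting as in the construction), then the complex (C^*, D_C) is acyclic: H^k(C^*, D_C) = 0 for all k. -/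
/-- The ε-coupled mapping-cone differential (as in the paper, eq. (diffp)). -/
noncomputable def coneD {R : Type*} [CommRing R] (m : ℤ)
    (X Y : ℤ → Type*) [∀ k, AddCommGroup (X k)] [∀ k, Module R (X k)]
    [∀ k, AddCommGroup (Y k)] [∀ k, Module R (Y k)]
    (DX : ∀ k, X k →ₗ[R] X (k + 1)) (DY : ∀ k, Y k →ₗ[R] Y (k + 1))
    (fh : ∀ k, X k →ₗ[R] Y (k + 1)) (gh : ∀ k, Y k →ₗ[R] X (k + 1))
    (ε : R) (k : ℤ) : X k × Y k →ₗ[R] X (k + 1) × Y (k + 1) :=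
  if k ≤ m - 1 then
    ((DX k).comp (LinearMap.fst R (X k) (Y k))
        + ε • (gh k).comp (LinearMap.snd R (X k) (Y k))).prod
      (- (DY k).comp (LinearMap.snd R (X k) (Y k)))
  else
    ((DX k).comp (LinearMap.fst R (X k) (Y k))).prod
      ((-ε) • (fh k).comp (LinearMap.fst R (X k) (Y k))
        - (DY k).comp (LinearMap.snd R (X k) (Y k)))

theorem coneD_apply_low {R : Type*} [CommRing R] {m : ℤ}
    {X Y : ℤ → Type*} [∀ k, AddCommGroup (X k)] [∀ k, Module R (X k)]
    [∀ k, AddCommGroup (Y k)] [∀ k, Module R (Y k)]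
    {DX : ∀ k, X k →ₗ[R] X (k + 1)} {DY : ∀ k, Y k →ₗ[R] Y (k + 1)}
    {fh : ∀ k, X k →ₗ[R] Y (k + 1)} {gh : ∀ k, Y k →ₗ[R] X (k + 1)}
    {ε : R} {k : ℤ} (hk : k ≤ m - 1) (p : X k × Y k) :
    coneD m X Y DX DY fh gh ε k p = (DX k p.1 + ε • gh k p.2, -(DY k p.2)) := by
  rw [coneD, if_pos hk]; rfl

theorem coneD_apply_high {R : Type*} [CommRing R] {m : ℤ}
    {X Y : ℤ → Type*} [∀ k, AddCommGroup (X k)] [∀ k, Module R (X k)]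
    [∀ k, AddCommGroup (Y k)] [∀ k, Module R (Y k)]
    {DX : ∀ k, X k →ₗ[R] X (k + 1)} {DY : ∀ k, Y k →ₗ[R] Y (k + 1)}
    {fh : ∀ k, X k →ₗ[R] Y (k + 1)} {gh : ∀ k, Y k →ₗ[R] X (k + 1)}
    {ε : R} {k : ℤ} (hk : ¬ k ≤ m - 1) (p : X k × Y k) :
    coneD m X Y DX DY fh gh ε k p = (DX k p.1, (-ε) • fh k p.1 - DY k p.2) := by
  rw [coneD, if_neg hk]; rfl

/-- Let `f : Ω → W` be a homotopy equivalence of cochain complexes with homotopy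
inverse (adjoint) `g`, where the middle differential `D_W : W^{m-1} → W^m`
vanishes.  Let `Ŵ` be the shifted complex, with `Ŵ^i ≅ W^{i+1}` for `i ≤ m-2`,
`Ŵ^{m-1} = Ŵ^m = 0` and `Ŵ^i ≅ W^{i-1}` for `i ≥ m+1`.  Then for invertible
`ε ≠ 0`, the ε-coupled mapping-cone complex `(C^* = Ω^* ⊕ Ŵ^*, D_C)` is acyclic:
`H^k(C^*, D_C) = 0` for all `k`. -/
theorem stmt_9 {R : Type*} [CommRing R] (m : ℤ) (ε : R) (hε : IsUnit ε)
    (Ω W Wh : ℤ → Type*)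
    [∀ k, AddCommGroup (Ω k)] [∀ k, Module R (Ω k)]
    [∀ k, AddCommGroup (W k)] [∀ k, Module R (W k)]
    [∀ k, AddCommGroup (Wh k)] [∀ k, Module R (Wh k)]
    (DΩ : ∀ k, Ω k →ₗ[R] Ω (k + 1)) (DW : ∀ k, W k →ₗ[R] W (k + 1))
    (DWh : ∀ k, Wh k →ₗ[R] Wh (k + 1))
    (hDΩ2 : ∀ k (x : Ω k), DΩ (k + 1) (DΩ k x) = 0)
    (hDW2 : ∀ k (x : W k), DW (k + 1) (DW k x) = 0)
    (hDWh2 : ∀ k (x : Wh k), DWh (k + 1) (DWh k x) = 0)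
    -- the middle differential of W vanishes:
    (hmidW : DW (m - 1) = 0)
    -- f is a homotopy equivalence with homotopy inverse g:
    (f : ∀ k, Ω k →ₗ[R] W k) (g : ∀ k, W k →ₗ[R] Ω k)
    (hf : ∀ k (x : Ω k), f (k + 1) (DΩ k x) = DW k (f k x))
    (hg : ∀ k (y : W k), g (k + 1) (DW k y) = DΩ k (g k y))
    (A : ∀ k, Ω (k + 1) →ₗ[R] Ω k) (Bh : ∀ k, W (k + 1) →ₗ[R] W k)
    (hA : ∀ k (x : Ω (k + 1)), x - g (k + 1) (f (k + 1) x)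
        = DΩ k (A k x) + A (k + 1) (DΩ (k + 1) x))
    (hB : ∀ k (y : W (k + 1)), y - f (k + 1) (g (k + 1) y)
        = DW k (Bh k y) + Bh (k + 1) (DW (k + 1) y))
    -- Ŵ is the shifted complex: zero in degrees m-1 and m,
    [Subsingleton (Wh (m - 1))] [Subsingleton (Wh m)]
    -- identified with the shift of W in degrees ≤ m-2,
    (eLow : ∀ k, Wh k →ₗ[R] W (k + 1))
    (heLow : ∀ k, k ≤ m - 2 → Function.Bijective (eLow k))
    (heLowD : ∀ k (w : Wh k), eLow (k + 1) (DWh k w) = DW (k + 1) (eLow k w))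
    -- and with the opposite shift of W in degrees ≥ m+1:
    (eHigh : ∀ k, W k →ₗ[R] Wh (k + 1))
    (heHigh : ∀ k, m ≤ k → Function.Bijective (eHigh k))
    (heHighD : ∀ k (w : W k), DWh (k + 1) (eHigh k w) = eHigh (k + 1) (DW k w)) :
    -- then the ε-coupled mapping-cone complex C = Ω ⊕ Ŵ (with f̂, ĝ the maps
    -- induced by f, g via the shift identifications) is acyclic:
    ∀ k (z : Ω (k + 1) × Wh (k + 1)),
      coneD m Ω Wh DΩ DWh (fun k => (eHigh k).comp (f k))
          (fun k => (g (k + 1)).comp (eLow k)) ε (k + 1) z = 0 →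
      ∃ y : Ω k × Wh k,
        coneD m Ω Wh DΩ DWh (fun k => (eHigh k).comp (f k))
          (fun k => (g (k + 1)).comp (eLow k)) ε k y = z := by
  obtain ⟨ν, hνε⟩ : ∃ ν : R, ν * ε = 1 := by
    have h := hε.unit.inv_mul
    rw [hε.unit_spec] at h
    exact ⟨_, h⟩
  have hεν : ε * ν = 1 := by rw [mul_comm]; exact hνε
  intro k z hz
  obtain ⟨x, w⟩ := z
  rcases (show k ≤ m - 3 ∨ k = m - 2 ∨ k = m - 1 ∨ k = m ∨ m + 1 ≤ k by omega)
    with h | h | h | h | h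
  · -- pure low region
    have hk1 : k + 1 ≤ m - 1 := by omega
    rw [coneD_apply_low hk1, Prod.ext_iff] at hz
    obtain ⟨h1, h2⟩ := hz
    simp only [LinearMap.comp_apply, Prod.fst_zero, Prod.snd_zero] at h1 h2
    have hw : DWh (k + 1) w = 0 := neg_eq_zero.mp h2
    set v : W (k + 1 + 1) := eLow (k + 1) w with hv_def
    have hx : DΩ (k + 1) x = -(ε • g (k + 1 + 1) v) := eq_neg_of_add_eq_zero_left h1
    have hv : DW (k + 1 + 1) v = 0 := by rw [hv_def, ← heLowD, hw, map_zero]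
    have hBv : DW (k + 1) (Bh (k + 1) v) = v - f (k + 1 + 1) (g (k + 1 + 1) v) := by
      have h5 := hB (k + 1) v
      rw [hv, map_zero, add_zero] at h5
      exact h5.symm
    have hDfx : DW (k + 1) (f (k + 1) x) = -(ε • f (k + 1 + 1) (g (k + 1 + 1) v)) := by
      rw [← hf, hx, map_neg, map_smul]
    set uu : W (k + 1) := ν • f (k + 1) x - Bh (k + 1) v with huu_def
    have hu : DW (k + 1) uu = -v := by
      rw [huu_def, map_sub, map_smul, hDfx, hBv, smul_neg, smul_smul, hνε, one_smul]
      abel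
    set ω : Ω (k + 1) := ν • x - g (k + 1) uu with hω_def
    have hDω : DΩ (k + 1) ω = 0 := by
      rw [hω_def, map_sub, map_smul, hx, ← hg, hu, map_neg, smul_neg, smul_smul,
        hνε, one_smul]
      abel
    have hAω : DΩ k (A k ω) = ω - g (k + 1) (f (k + 1) ω) := by
      have h5 := hA k ω
      rw [hDω, map_zero, add_zero] at h5
      exact h5.symm
    set u1 : W (k + 1) := uu + f (k + 1) ω with hu1_def
    have hu1 : DW (k + 1) u1 = -v := by
      rw [hu1_def, map_add, hu, ← hf, hDω, map_zero, add_zero]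
    obtain ⟨b, hb⟩ := (heLow k (by omega)).2 u1
    refine ⟨(ε • A k ω, b), ?_⟩
    rw [coneD_apply_low (by omega : k ≤ m - 1)]
    simp only [LinearMap.comp_apply]
    rw [Prod.mk.injEq]
    constructor
    · rw [hb, map_smul, hAω, hu1_def, map_add, hω_def]
      match_scalars <;> first
        | ring1 | linear_combination hνε | linear_combination ε * hνε | linear_combination (1 + ε) * hνε | linear_combination (-(1 + ε)) * hνε | linear_combination (1 + ν) * hνε | linear_combination (-(1 + ν)) * hνε | linear_combination (-(1+ν)) * hνε
        | linear_combination ν * hνε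
    · have h5 : eLow (k + 1) (DWh k b) = eLow (k + 1) (-w) := by
        rw [heLowD, hb, hu1, hv_def, map_neg]
      have h6 := (heLow (k + 1) (by omega)).1 h5
      rw [h6, neg_neg]
  · -- degree of z is m - 1
    subst h
    haveI hsub : Subsingleton (Wh (m - 2 + 1)) := by
      rw [show m - 2 + 1 = m - 1 by ring]; infer_instance
    have hw0 : w = 0 := Subsingleton.elim w 0
    rw [coneD_apply_low (by omega), Prod.ext_iff] at hz
    obtain ⟨h1, h2⟩ := hz
    simp only [LinearMap.comp_apply, Prod.fst_zero, hw0, map_zero, smul_zero,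
      add_zero] at h1
    have hAx : DΩ (m - 2) (A (m - 2) x) = x - g (m - 2 + 1) (f (m - 2 + 1) x) := by
      have h5 := hA (m - 2) x
      rw [h1, map_zero, add_zero] at h5
      exact h5.symm
    obtain ⟨b, hb⟩ := (heLow (m - 2) (by omega)).2 (ν • f (m - 2 + 1) x)
    refine ⟨(A (m - 2) x, b), ?_⟩
    rw [coneD_apply_low (by omega : m - 2 ≤ m - 1)]
    simp only [LinearMap.comp_apply]
    rw [Prod.mk.injEq]
    refine ⟨?_, Subsingleton.elim _ _⟩
    rw [hb, hAx, map_smul, smul_smul, hεν, one_smul]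
    abel
  · -- degree of z is m
    subst h
    haveI hsub : Subsingleton (Wh (m - 1 + 1)) := by
      rw [show m - 1 + 1 = m by ring]; infer_instance
    have hw0 : w = 0 := Subsingleton.elim w 0
    rw [coneD_apply_high (by omega), Prod.ext_iff] at hz
    obtain ⟨h1, h2⟩ := hz
    simp only [LinearMap.comp_apply, Prod.fst_zero, Prod.snd_zero, hw0, map_zero,
      sub_zero] at h1 h2
    have hfx : f (m - 1 + 1) x = 0 := by
      have h3 : eHigh (m - 1 + 1) ((-ε) • f (m - 1 + 1) x) = eHigh (m - 1 + 1) 0 := by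
        rw [map_smul, map_zero]; exact h2
      have h4 := (heHigh (m - 1 + 1) (by omega)).1 h3
      calc f (m - 1 + 1) x = (ν * ε) • f (m - 1 + 1) x := by rw [hνε, one_smul]
        _ = (-ν) • ((-ε) • f (m - 1 + 1) x) := by
            rw [smul_smul, show (-ν) * (-ε) = ν * ε by ring]
        _ = 0 := by rw [h4, smul_zero]
    refine ⟨(A (m - 1) x, 0), ?_⟩
    rw [coneD_apply_low (by omega : m - 1 ≤ m - 1)]
    simp only [LinearMap.comp_apply]
    rw [Prod.mk.injEq]
    refine ⟨?_, Subsingleton.elim _ _⟩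
    rw [map_zero, map_zero, smul_zero, add_zero]
    have h5 := hA (m - 1) x
    rw [h1, hfx, map_zero, map_zero, add_zero, sub_zero] at h5
    exact h5.symm
  · -- degree of z is m + 1
    obtain ⟨n, hn⟩ : ∃ n : ℤ, k = n + 1 := ⟨k - 1, by ring⟩
    subst hn
    subst h
    have hmid' : DW n = 0 := by rw [show n = n + 1 - 1 by ring]; exact hmidW
    rw [coneD_apply_high (by omega), Prod.ext_iff] at hz
    obtain ⟨h1, h2⟩ := hz
    simp only [LinearMap.comp_apply, Prod.fst_zero, Prod.snd_zero] at h1 h2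
    obtain ⟨w0, hw0⟩ := (heHigh (n + 1) (by omega)).2 w
    have hDw : DW (n + 1) w0 = (-ε) • f (n + 1 + 1) x := by
      have h3 : eHigh (n + 1 + 1) ((-ε) • f (n + 1 + 1) x - DW (n + 1) w0)
          = eHigh (n + 1 + 1) 0 := by
        rw [map_zero, map_sub, map_smul, ← heHighD, hw0]
        exact h2
      have h4 := (heHigh (n + 1 + 1) (by omega)).1 h3
      exact (sub_eq_zero.mp h4).symm
    have hAx : DΩ (n + 1) (A (n + 1) x) = x - g (n + 1 + 1) (f (n + 1 + 1) x) := by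
      have h5 := hA (n + 1) x
      rw [h1, map_zero, add_zero] at h5
      exact h5.symm
    set a0 : Ω (n + 1) := A (n + 1) x - ν • g (n + 1) w0 with ha0_def
    have ha0 : DΩ (n + 1) a0 = x := by
      rw [ha0_def, map_sub, map_smul, hAx, ← hg, hDw, map_smul, smul_smul,
        show ν * -ε = -(ν * ε) by ring, hνε, neg_smul, one_smul, sub_neg_eq_add]
      abel
    set η : W (n + 1) := -w0 - ε • f (n + 1) a0 with hη_def
    have hDη : DW (n + 1) η = 0 := by
      rw [hη_def, map_sub, map_neg, map_smul, hDw, ← hf, ha0, neg_smul, neg_neg]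
      abel
    have hkey : η = f (n + 1) (g (n + 1) η) := by
      have h5 := hB n η
      rw [hmid', hDη, map_zero, LinearMap.zero_apply, add_zero] at h5
      exact sub_eq_zero.mp h5
    refine ⟨(a0 + ν • g (n + 1) η, 0), ?_⟩
    rw [coneD_apply_high (by omega : ¬ n + 1 ≤ n + 1 - 1)]
    simp only [LinearMap.comp_apply]
    rw [Prod.mk.injEq]
    constructor
    · rw [map_add, ha0, map_smul, ← hg, hDη, map_zero, smul_zero, add_zero]
    · rw [map_zero, sub_zero, ← hw0, ← map_smul]
      congr 1
      rw [map_add, map_smul, ← hkey, hη_def]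
      match_scalars <;> first
        | ring1 | linear_combination hνε | linear_combination ε * hνε | linear_combination (1 + ε) * hνε | linear_combination (-(1 + ε)) * hνε | linear_combination (1 + ν) * hνε | linear_combination (-(1 + ν)) * hνε | linear_combination (-(1+ν)) * hνε
        | linear_combination ν * hνε
  · -- pure high region
    obtain ⟨n, hn⟩ : ∃ n : ℤ, k = n + 1 := ⟨k - 1, by ring⟩
    subst hn
    rw [coneD_apply_high (by omega), Prod.ext_iff] at hz
    obtain ⟨h1, h2⟩ := hz
    simp only [LinearMap.comp_apply, Prod.fst_zero, Prod.snd_zero] at h1 h2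
    obtain ⟨w0, hw0⟩ := (heHigh (n + 1) (by omega)).2 w
    have hDw : DW (n + 1) w0 = (-ε) • f (n + 1 + 1) x := by
      have h3 : eHigh (n + 1 + 1) ((-ε) • f (n + 1 + 1) x - DW (n + 1) w0)
          = eHigh (n + 1 + 1) 0 := by
        rw [map_zero, map_sub, map_smul, ← heHighD, hw0]
        exact h2
      have h4 := (heHigh (n + 1 + 1) (by omega)).1 h3
      exact (sub_eq_zero.mp h4).symm
    have hAx : DΩ (n + 1) (A (n + 1) x) = x - g (n + 1 + 1) (f (n + 1 + 1) x) := by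
      have h5 := hA (n + 1) x
      rw [h1, map_zero, add_zero] at h5
      exact h5.symm
    set a0 : Ω (n + 1) := A (n + 1) x - ν • g (n + 1) w0 with ha0_def
    have ha0 : DΩ (n + 1) a0 = x := by
      rw [ha0_def, map_sub, map_smul, hAx, ← hg, hDw, map_smul, smul_smul,
        show ν * -ε = -(ν * ε) by ring, hνε, neg_smul, one_smul, sub_neg_eq_add]
      abel
    set η : W (n + 1) := -w0 - ε • f (n + 1) a0 with hη_def
    have hDη : DW (n + 1) η = 0 := by
      rw [hη_def, map_sub, map_neg, map_smul, hDw, ← hf, ha0, neg_smul, neg_neg]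
      abel
    have hkey : η - f (n + 1) (g (n + 1) η) = DW n (Bh n η) := by
      have h5 := hB n η
      rw [hDη, map_zero, add_zero] at h5
      exact h5
    refine ⟨(a0 + ν • g (n + 1) η, eHigh n (Bh n η)), ?_⟩
    rw [coneD_apply_high (by omega : ¬ n + 1 ≤ m - 1)]
    simp only [LinearMap.comp_apply]
    rw [Prod.mk.injEq]
    constructor
    · rw [map_add, ha0, map_smul, ← hg, hDη, map_zero, smul_zero, add_zero]
    · rw [heHighD, ← hw0, ← map_smul, ← map_sub]
      congr 1
      rw [← hkey, map_add, map_smul]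
      have hfa0 : ε • f (n + 1) a0 = -w0 - η := by rw [hη_def]; module
      rw [smul_add, smul_smul, show -ε * ν = -(ε * ν) by ring, hεν]
      simp only [neg_smul, one_smul]
      rw [hfa0]
      abel
end
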